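/- If a measure μ on ℝ² is invariant under all rotations about the origin and is translation bounded, then its pure point part is supported on {0}. -/

import Mathlib

open MeasureTheory
open scoped ENNReal

/-- Rotation of the Euclidean plane through the angle θ. -/
noncomputable def rotE (θ : ℝ) (x : EuclideanSpace ℝ (Fin 2)) : EuclideanSpace ℝ (Fin 2) :=
  WithLp.toLp 2 ![Real.cos θ * x 0 - Real.sin θ * x 1, Real.sin θ * x 0 + Real.cos θ * x 1]

lemma rotE_add (θ φ : ℝ) (x : EuclideanSpace ℝ (Fin 2)) :
    rotE θ (rotE φ x) = rotE (θ + φ) x := by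
  ext i
  fin_cases i <;>
    simp [rotE, Real.cos_add, Real.sin_add] <;> ring

lemma rotE_zero (x : EuclideanSpace ℝ (Fin 2)) : rotE 0 x = x := by
  ext i; fin_cases i <;> simp [rotE]

lemma continuous_rotE (θ : ℝ) : Continuous (rotE θ) := by
  unfold rotE
  refine Continuous.comp (f := fun x : EuclideanSpace ℝ (Fin 2) =>
      (![Real.cos θ * x 0 - Real.sin θ * x 1, Real.sin θ * x 0 + Real.cos θ * x 1] : Fin 2 → ℝ))
    (g := (WithLp.equiv 2 (Fin 2 → ℝ)).symm) ?_ ?_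
  · exact PiLp.continuous_toLp 2 _
  · apply continuous_pi
    intro i
    fin_cases i <;> simp <;> fun_prop

lemma continuous_rotE_theta (p : EuclideanSpace ℝ (Fin 2)) :
    Continuous fun θ : ℝ => rotE θ p := by
  unfold rotE
  refine Continuous.comp (g := (WithLp.equiv 2 (Fin 2 → ℝ)).symm) ?_ ?_
  · exact PiLp.continuous_toLp 2 _
  · apply continuous_pi
    intro i
    fin_cases i
    · show Continuous fun a : ℝ => Real.cos a * p 0 - Real.sin a * p 1
      fun_prop
    · show Continuous fun a : ℝ => Real.sin a * p 0 + Real.cos a * p 1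
      fun_prop

lemma rotE_inj_angle (p : EuclideanSpace ℝ (Fin 2)) (hp : p ≠ 0) {a b : ℝ}
    (ha : a ∈ Set.Icc 0 Real.pi) (hb : b ∈ Set.Icc 0 Real.pi)
    (h : rotE a p = rotE b p) : a = b := by
  have h0 := congrArg (· 0) h
  have h1 := congrArg (· 1) h
  simp only [rotE, PiLp.toLp_apply, Matrix.cons_val_zero, Matrix.cons_val_one, Matrix.head_cons] at h0 h1
  set c := Real.cos a - Real.cos b with hcdef
  set s := Real.sin a - Real.sin b with hsdef
  have e0 : c * p 0 = s * p 1 := by simp only [hcdef, hsdef]; ring_nf; linarith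
  have e1 : s * p 0 = -(c * p 1) := by simp only [hcdef, hsdef]; ring_nf; linarith
  have hp' : p 0 ≠ 0 ∨ p 1 ≠ 0 := by
    by_contra h'
    push_neg at h'
    apply hp
    ext i
    fin_cases i
    · exact h'.1
    · exact h'.2
  have hcs : c ^ 2 + s ^ 2 = 0 := by
    rcases hp' with h' | h'
    · have : (c ^ 2 + s ^ 2) * p 0 = 0 := by linear_combination c * e0 + s * e1
      exact (mul_eq_zero.1 this).resolve_right h'
    · have : (c ^ 2 + s ^ 2) * p 1 = 0 := by linear_combination c * e1 - s * e0
      exact (mul_eq_zero.1 this).resolve_right h'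
  have hc : Real.cos a = Real.cos b := by nlinarith [sq_nonneg c, sq_nonneg s]
  exact Real.injOn_cos ha hb hc

/-- A rotation-invariant, translation-bounded measure on ℝ² has all its atoms at the
origin, i.e. its pure point part is supported on {0}. -/
theorem rotation_invariant_translation_bounded_pp_at_origin
    (μ : Measure (EuclideanSpace ℝ (Fin 2)))
    (hrot : ∀ θ : ℝ, Measure.map (rotE θ) μ = μ)
    (hbd : ∃ C : ℝ≥0∞, C ≠ ⊤ ∧ ∀ x : EuclideanSpace ℝ (Fin 2), μ (Metric.ball x 1) ≤ C) :
    ∀ p : EuclideanSpace ℝ (Fin 2), p ≠ 0 → μ {p} = 0 := by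
  intro p hp
  by_contra hμp
  obtain ⟨C, hC, hball⟩ := hbd
  -- invariance of atom mass
  have key : ∀ θ : ℝ, μ {rotE θ p} = μ {p} := by
    intro θ
    conv_lhs => rw [← hrot θ]
    rw [Measure.map_apply (continuous_rotE θ).measurable (measurableSet_singleton _)]
    congr 1
    ext y
    simp only [Set.mem_preimage, Set.mem_singleton_iff]
    constructor
    · intro hy
      have := congrArg (rotE (-θ)) hy
      rwa [rotE_add, rotE_add, neg_add_cancel, rotE_zero, rotE_zero] at this
    · rintro rfl; rfl
  -- small-angle ball control
  have hcont : ContinuousAt (fun θ : ℝ => rotE θ p) 0 :=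
    (continuous_rotE_theta p).continuousAt
  rw [Metric.continuousAt_iff] at hcont
  obtain ⟨δ, hδpos, hδ⟩ := hcont 1 one_pos
  set ε : ℝ := min δ Real.pi with hε
  have hεpos : 0 < ε := lt_min hδpos Real.pi_pos
  set θn : ℕ → ℝ := fun n => ε / (n + 2) with hθn
  have hθpos : ∀ n, 0 < θn n := fun n => by positivity
  have hθlt : ∀ n : ℕ, θn n < δ := by
    intro n
    have h1 : θn n ≤ ε / 2 := by
      refine div_le_div_of_nonneg_left hεpos.le (by norm_num) ?_
      have := Nat.cast_nonneg (α := ℝ) n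
      linarith
    have h2 : ε / 2 < ε := by linarith
    have h3 : ε ≤ δ := min_le_left _ _
    linarith
  have hθle : ∀ n, θn n ∈ Set.Icc 0 Real.pi := by
    intro n
    refine ⟨(hθpos n).le, ?_⟩
    have h1 : θn n ≤ ε / 2 := by
      refine div_le_div_of_nonneg_left hεpos.le (by norm_num) ?_
      have := Nat.cast_nonneg (α := ℝ) n
      linarith
    have h3 : ε ≤ Real.pi := min_le_right _ _
    linarith
  set x : ℕ → EuclideanSpace ℝ (Fin 2) := fun n => rotE (θn n) p with hx
  have hinj : Function.Injective x := by
    intro m n hmn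
    have := rotE_inj_angle p hp (hθle m) (hθle n) hmn
    have hm : (0:ℝ) < (m:ℝ) + 2 := by positivity
    have hn : (0:ℝ) < (n:ℝ) + 2 := by positivity
    rw [hθn, div_eq_div_iff hm.ne' hn.ne'] at this
    have h2 : ((m : ℝ) + 2) = (n : ℝ) + 2 := mul_left_cancel₀ hεpos.ne' (by linarith)
    have h3 : (m : ℝ) = n := by linarith
    exact_mod_cast h3
  have hdisj : Pairwise (Function.onFun Disjoint fun n => ({x n} : Set (EuclideanSpace ℝ (Fin 2)))) := by
    intro m n hmn
    simp only [Function.onFun, Set.disjoint_singleton]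
    exact fun e => hmn (hinj e)
  have hU : μ (⋃ n, ({x n} : Set (EuclideanSpace ℝ (Fin 2)))) = ∑' n : ℕ, μ {x n} :=
    measure_iUnion hdisj fun n => measurableSet_singleton _
  have htop : μ (⋃ n, ({x n} : Set (EuclideanSpace ℝ (Fin 2)))) = ⊤ := by
    rw [hU]
    have : ∀ n : ℕ, μ {x n} = μ {p} := fun n => key (θn n)
    simp_rw [this]
    exact ENNReal.tsum_const_eq_top_of_ne_zero hμp
  have hsub : (⋃ n, ({x n} : Set (EuclideanSpace ℝ (Fin 2)))) ⊆ Metric.ball p 1 := by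
    rintro y hy
    simp only [Set.mem_iUnion, Set.mem_singleton_iff] at hy
    obtain ⟨n, rfl⟩ := hy
    have hd : dist (θn n) 0 < δ := by
      rw [Real.dist_eq, sub_zero, abs_of_pos (hθpos n)]
      exact hθlt n
    have := hδ hd
    rw [rotE_zero] at this
    exact Metric.mem_ball.2 this
  have : (⊤ : ℝ≥0∞) ≤ C := by
    calc (⊤ : ℝ≥0∞) = μ (⋃ n, ({x n} : Set _)) := htop.symm
    _ ≤ μ (Metric.ball p 1) := measure_mono hsub
    _ ≤ C := hball p
  exact hC (top_le_iff.1 this)
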